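/- Let C and D be closed model categories and (S, U): C → D a Quillen equivalence. Suppose in addition that the terminal object * of C is cofibrant and that S preserves the terminal object (the canonical map S(*) → * is an isomorphism). Then the induced Quillen adjunction (S_*, U_*): C_* → D_* between the pointed model categories C_* = (*↓C) and D_* = (*↓D) is a Quillen equivalence. -/

import Mathlib

/-! Since `S(*) ⟶ *` is an isomorphism, the pushout defining `S_*` changes nothing: the
underlying arrow of `S_* m` is isomorphic to `S m`, so `S_*` preserves (trivial) cofibrations, and
the adjunct of a pointed map `f : S_* A ⟶ B` is, underneath, the adjunct of `S A ≅ S_* A ⟶ B`. A cofibrant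
pointed object `* ⟶ A` is a cofibration out of the cofibrant object `*`, so `A` is cofibrant, and a
fibrant pointed object is fibrant in `D`; hence the Quillen equivalence condition for
`(S_*, U_*)` is that for `(S, U)`. -/

open CategoryTheory CategoryTheory.Limits

universe v u v' u'

/-- `f` is a retract of `g` in the arrow category. -/
def IsRetractOfArrow {C : Type u} [Category.{v} C] {A B A' B' : C}
    (f : A ⟶ B) (g : A' ⟶ B') : Prop :=
  ∃ (i : Arrow.mk f ⟶ Arrow.mk g) (r : Arrow.mk g ⟶ Arrow.mk f), i ≫ r = 𝟙 (Arrow.mk f)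

/-- A (closed) model structure on a category `C`, in the sense of Quillen: three classes of
morphisms (cofibrations, fibrations, weak equivalences) satisfying the two-out-of-three
axiom, closure under retracts, the lifting axioms and the factorization axioms. -/
structure ModelStruct (C : Type u) [Category.{v} C] : Type (max u v) where
  cof : MorphismProperty C
  fib : MorphismProperty C
  weq : MorphismProperty C
  weq_comp : ∀ {X Y Z : C} (f : X ⟶ Y) (g : Y ⟶ Z), weq f → weq g → weq (f ≫ g)
  weq_cancel_left : ∀ {X Y Z : C} (f : X ⟶ Y) (g : Y ⟶ Z), weq f → weq (f ≫ g) → weq g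
  weq_cancel_right : ∀ {X Y Z : C} (f : X ⟶ Y) (g : Y ⟶ Z), weq g → weq (f ≫ g) → weq f
  cof_retract : ∀ {A B A' B' : C} {f : A ⟶ B} {g : A' ⟶ B'},
    IsRetractOfArrow f g → cof g → cof f
  fib_retract : ∀ {A B A' B' : C} {f : A ⟶ B} {g : A' ⟶ B'},
    IsRetractOfArrow f g → fib g → fib f
  weq_retract : ∀ {A B A' B' : C} {f : A ⟶ B} {g : A' ⟶ B'},
    IsRetractOfArrow f g → weq g → weq f
  lifting_cof_trivFib : ∀ {A B X Y : C} (i : A ⟶ B) (p : X ⟶ Y),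
    cof i → fib p → weq p → HasLiftingProperty i p
  lifting_trivCof_fib : ∀ {A B X Y : C} (i : A ⟶ B) (p : X ⟶ Y),
    cof i → weq i → fib p → HasLiftingProperty i p
  factor_cof_trivFib : ∀ {X Y : C} (f : X ⟶ Y),
    ∃ (Z : C) (i : X ⟶ Z) (p : Z ⟶ Y), cof i ∧ fib p ∧ weq p ∧ i ≫ p = f
  factor_trivCof_fib : ∀ {X Y : C} (f : X ⟶ Y),
    ∃ (Z : C) (i : X ⟶ Z) (p : Z ⟶ Y), cof i ∧ weq i ∧ fib p ∧ i ≫ p = f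

variable {C : Type u} [Category.{v} C]

/-- An object is cofibrant if the unique map from the initial object to it is a cofibration. -/
def ModelStruct.Cofibrant [HasInitial C] (M : ModelStruct C) (A : C) : Prop :=
  M.cof (initial.to A)

/-- An object is fibrant if the unique map from it to the terminal object is a fibration. -/
def ModelStruct.Fibrant [HasTerminal C] (M : ModelStruct C) (A : C) : Prop :=
  M.fib (terminal.from A)

/-- The induced model structure on the coslice category `(X ↓ C)`: a morphism is a
cofibration, fibration or weak equivalence iff its underlying morphism in `C` is one. -/
def ModelStruct.under (M : ModelStruct C) (X : C) : ModelStruct (Under X) where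
  cof _ _ f := M.cof f.right
  fib _ _ f := M.fib f.right
  weq _ _ f := M.weq f.right
  weq_comp f g hf hg := by simpa using M.weq_comp f.right g.right hf hg
  weq_cancel_left f g hf hfg := M.weq_cancel_left f.right g.right hf (by simpa using hfg)
  weq_cancel_right f g hg hfg := M.weq_cancel_right f.right g.right hg (by simpa using hfg)
  cof_retract := fun ⟨i, r, hir⟩ hg => M.cof_retract
    ⟨(Under.forget X).mapArrow.map i, (Under.forget X).mapArrow.map r,
      by exact (CategoryTheory.Functor.map_comp _ i r).symm.trans
          ((congrArg (Under.forget X).mapArrow.map hir).trans (CategoryTheory.Functor.map_id _ _))⟩ hg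
  fib_retract := fun ⟨i, r, hir⟩ hg => M.fib_retract
    ⟨(Under.forget X).mapArrow.map i, (Under.forget X).mapArrow.map r,
      by exact (CategoryTheory.Functor.map_comp _ i r).symm.trans
          ((congrArg (Under.forget X).mapArrow.map hir).trans (CategoryTheory.Functor.map_id _ _))⟩ hg
  weq_retract := fun ⟨i, r, hir⟩ hg => M.weq_retract
    ⟨(Under.forget X).mapArrow.map i, (Under.forget X).mapArrow.map r,
      by exact (CategoryTheory.Functor.map_comp _ i r).symm.trans
          ((congrArg (Under.forget X).mapArrow.map hir).trans (CategoryTheory.Functor.map_id _ _))⟩ hg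
  lifting_cof_trivFib i p hi hp hp' := by
    constructor
    intro f g sq
    haveI := M.lifting_cof_trivFib i.right p.right hi hp hp'
    have sq' : CommSq f.right i.right p.right g.right :=
      ⟨by rw [← Under.comp_right, sq.w, Under.comp_right]⟩
    exact ⟨⟨⟨Under.homMk sq'.lift (by
        rw [← Under.w i, Category.assoc, sq'.fac_left, Under.w f]),
      by ext; exact sq'.fac_left, by ext; exact sq'.fac_right⟩⟩⟩
  lifting_trivCof_fib i p hi hi' hp := by
    constructor
    intro f g sq
    haveI := M.lifting_trivCof_fib i.right p.right hi hi' hp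
    have sq' : CommSq f.right i.right p.right g.right :=
      ⟨by rw [← Under.comp_right, sq.w, Under.comp_right]⟩
    exact ⟨⟨⟨Under.homMk sq'.lift (by
        rw [← Under.w i, Category.assoc, sq'.fac_left, Under.w f]),
      by ext; exact sq'.fac_left, by ext; exact sq'.fac_right⟩⟩⟩
  factor_cof_trivFib {A B} f := by
    obtain ⟨Z, i, p, hi, hp, hp', hfac⟩ := M.factor_cof_trivFib f.right
    exact ⟨Under.mk (A.hom ≫ i), Under.homMk i rfl,
      Under.homMk p (by show (A.hom ≫ i) ≫ p = B.hom; rw [Category.assoc, hfac, Under.w f]),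
      hi, hp, hp', by ext; exact hfac⟩
  factor_trivCof_fib {A B} f := by
    obtain ⟨Z, i, p, hi, hi', hp, hfac⟩ := M.factor_trivCof_fib f.right
    exact ⟨Under.mk (A.hom ≫ i), Under.homMk i rfl,
      Under.homMk p (by show (A.hom ≫ i) ≫ p = B.hom; rw [Category.assoc, hfac, Under.w f]),
      hi, hi', hp, by ext; exact hfac⟩

/-- The induced model structure on the slice category `(C ↓ X)`: a morphism is a
cofibration, fibration or weak equivalence iff its underlying morphism in `C` is one. -/
def ModelStruct.over (M : ModelStruct C) (X : C) : ModelStruct (Over X) where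
  cof _ _ f := M.cof f.left
  fib _ _ f := M.fib f.left
  weq _ _ f := M.weq f.left
  weq_comp f g hf hg := by simpa using M.weq_comp f.left g.left hf hg
  weq_cancel_left f g hf hfg := M.weq_cancel_left f.left g.left hf (by simpa using hfg)
  weq_cancel_right f g hg hfg := M.weq_cancel_right f.left g.left hg (by simpa using hfg)
  cof_retract := fun ⟨i, r, hir⟩ hg => M.cof_retract
    ⟨(Over.forget X).mapArrow.map i, (Over.forget X).mapArrow.map r,
      by exact (CategoryTheory.Functor.map_comp _ i r).symm.trans
          ((congrArg (Over.forget X).mapArrow.map hir).trans (CategoryTheory.Functor.map_id _ _))⟩ hg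
  fib_retract := fun ⟨i, r, hir⟩ hg => M.fib_retract
    ⟨(Over.forget X).mapArrow.map i, (Over.forget X).mapArrow.map r,
      by exact (CategoryTheory.Functor.map_comp _ i r).symm.trans
          ((congrArg (Over.forget X).mapArrow.map hir).trans (CategoryTheory.Functor.map_id _ _))⟩ hg
  weq_retract := fun ⟨i, r, hir⟩ hg => M.weq_retract
    ⟨(Over.forget X).mapArrow.map i, (Over.forget X).mapArrow.map r,
      by exact (CategoryTheory.Functor.map_comp _ i r).symm.trans
          ((congrArg (Over.forget X).mapArrow.map hir).trans (CategoryTheory.Functor.map_id _ _))⟩ hg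
  lifting_cof_trivFib i p hi hp hp' := by
    constructor
    intro f g sq
    haveI := M.lifting_cof_trivFib i.left p.left hi hp hp'
    have sq' : CommSq f.left i.left p.left g.left :=
      ⟨by rw [← Over.comp_left, sq.w, Over.comp_left]⟩
    exact ⟨⟨⟨Over.homMk sq'.lift (by
        rw [← Over.w p, ← Category.assoc, sq'.fac_right, Over.w g]),
      by ext; exact sq'.fac_left, by ext; exact sq'.fac_right⟩⟩⟩
  lifting_trivCof_fib i p hi hi' hp := by
    constructor
    intro f g sq
    haveI := M.lifting_trivCof_fib i.left p.left hi hi' hp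
    have sq' : CommSq f.left i.left p.left g.left :=
      ⟨by rw [← Over.comp_left, sq.w, Over.comp_left]⟩
    exact ⟨⟨⟨Over.homMk sq'.lift (by
        rw [← Over.w p, ← Category.assoc, sq'.fac_right, Over.w g]),
      by ext; exact sq'.fac_left, by ext; exact sq'.fac_right⟩⟩⟩
  factor_cof_trivFib {A B} f := by
    obtain ⟨Z, i, p, hi, hp, hp', hfac⟩ := M.factor_cof_trivFib f.left
    exact ⟨Over.mk (p ≫ B.hom), Over.homMk i (by show i ≫ p ≫ B.hom = A.hom; rw [← Category.assoc, hfac, Over.w f]),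
      Over.homMk p rfl, hi, hp, hp', by ext; exact hfac⟩
  factor_trivCof_fib {A B} f := by
    obtain ⟨Z, i, p, hi, hi', hp, hfac⟩ := M.factor_trivCof_fib f.left
    exact ⟨Over.mk (p ≫ B.hom), Over.homMk i (by show i ≫ p ≫ B.hom = A.hom; rw [← Category.assoc, hfac, Over.w f]),
      Over.homMk p rfl, hi, hi', hp, by ext; exact hfac⟩

noncomputable instance (X : C) : HasInitial (Under X) :=
  Under.mkIdInitial.hasInitial

noncomputable instance (X : C) : HasTerminal (Over X) :=
  Over.mkIdTerminal.hasTerminal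

/-- The terminal object of `(X ↓ C)` is `X ⟶ *`. -/
noncomputable def underMkTerminal [HasTerminal C] (X : C) :
    IsTerminal (Under.mk (terminal.from X)) :=
  IsTerminal.ofUniqueHom (fun u => Under.homMk (terminal.from u.right)
      (terminal.hom_ext _ _))
    (fun u m => by ext; exact terminal.hom_ext _ _)

noncomputable instance [HasTerminal C] (X : C) : HasTerminal (Under X) :=
  (underMkTerminal X).hasTerminal

/-- The initial object of `(C ↓ X)` is `∅ ⟶ X`. -/
noncomputable def overMkInitial [HasInitial C] (X : C) :
    IsInitial (Over.mk (initial.to X)) :=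
  IsInitial.ofUniqueHom (fun u => Over.homMk (initial.to u.left)
      (initial.hom_ext _ _))
    (fun u m => by ext; exact initial.hom_ext _ _)

noncomputable instance [HasInitial C] (X : C) : HasInitial (Over X) :=
  (overMkInitial X).hasInitial

/-- A Quillen adjunction between model categories: an adjoint pair whose left adjoint
preserves cofibrations and acyclic cofibrations. -/
structure QuillenAdjunction {C : Type u} [Category.{v} C] {D : Type u'} [Category.{v'} D]
    (M : ModelStruct C) (N : ModelStruct D) (F : C ⥤ D) (G : D ⥤ C) where
  adj : F ⊣ G
  map_cof : ∀ {A B : C} (f : A ⟶ B), M.cof f → N.cof (F.map f)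
  map_trivCof_weq : ∀ {A B : C} (f : A ⟶ B), M.cof f → M.weq f → N.weq (F.map f)

/-- A Quillen adjunction is a Quillen equivalence if for every cofibrant `A` and fibrant `B`,
a map `F A ⟶ B` is a weak equivalence iff its adjunct `A ⟶ G B` is. -/
def IsQuillenEquivalence {C : Type u} [Category.{v} C] {D : Type u'} [Category.{v'} D]
    [HasInitial C] [HasTerminal D]
    (M : ModelStruct C) (N : ModelStruct D) {F : C ⥤ D} {G : D ⥤ C} (adj : F ⊣ G) : Prop :=
  ∀ (A : C) (B : D), M.Cofibrant A → N.Fibrant B →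
    ∀ f : F.obj A ⟶ B, N.weq f ↔ M.weq ((adj.homEquiv A B) f)

lemma MorphismProperty.respectsIso_of_isRetractOfArrow {P : MorphismProperty C}
    (hP : ∀ {A B A' B' : C} {f : A ⟶ B} {g : A' ⟶ B'}, IsRetractOfArrow f g → P g → P f) :
    P.RespectsIso :=
  .of_respects_arrow_iso _ fun _ _ e => hP ⟨e.inv, e.hom, e.inv_hom_id⟩

namespace ModelStruct

variable (M : ModelStruct C)

instance : M.cof.RespectsIso := MorphismProperty.respectsIso_of_isRetractOfArrow M.cof_retract

instance : M.fib.RespectsIso := MorphismProperty.respectsIso_of_isRetractOfArrow M.fib_retract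

instance : M.weq.RespectsIso := MorphismProperty.respectsIso_of_isRetractOfArrow M.weq_retract

/-- `f ≫ g` has the left lifting property against trivial fibrations, so it is a retract of the
first half of its own factorization. -/
lemma cof_comp {X Y Z : C} (f : X ⟶ Y) (g : Y ⟶ Z) (hf : M.cof f) (hg : M.cof g) :
    M.cof (f ≫ g) := by
  obtain ⟨W, i, p, hi, hp, hp', hfac⟩ := M.factor_cof_trivFib (f ≫ g)
  have := M.lifting_cof_trivFib f p hf hp hp'
  have := M.lifting_cof_trivFib g p hg hp hp'
  have sq : CommSq i (f ≫ g) p (𝟙 Z) := ⟨by simp [hfac]⟩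
  exact M.cof_retract
    ⟨Arrow.homMk (u := 𝟙 X) (v := sq.lift) (by simp [sq.fac_left]),
     Arrow.homMk (u := 𝟙 X) (v := p) (by simp [hfac]),
     by ext <;> simp [sq.fac_right]⟩ hi

lemma under_cofibrant_iff {X : C} (A : Under X) : (M.under X).Cofibrant A ↔ M.cof A.hom := by
  let i : Under.mk (𝟙 X) ⟶ ⊥_ Under X := Under.mkIdInitial.to _
  have : IsIso i := isIso_of_isInitial Under.mkIdInitial initialIsInitial i
  have : IsIso i.right := inferInstanceAs (IsIso ((Under.forget X).map i))
  change M.cof (initial.to A).right ↔ _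
  rw [← M.cof.cancel_left_of_respectsIso i.right, ← Under.comp_right,
    Under.mkIdInitial.hom_ext (i ≫ _) (Under.mkIdInitial.to A), Under.mkIdInitial_to_right]

lemma under_fibrant_iff [HasTerminal C] {X : C} (B : Under X) :
    (M.under X).Fibrant B ↔ M.Fibrant B.right := by
  have e : (⊤_ Under X).right ≅ ⊤_ C :=
    (Under.forget X).mapIso (terminalIsoIsTerminal (underMkTerminal X))
  exact M.fib.arrow_mk_iso_iff (Arrow.isoMk (Iso.refl _) e (terminal.hom_ext _ _))

lemma cofibrant_right_of_cofibrant_under [HasInitial C] {X : C} (hX : M.Cofibrant X) {A : Under X}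
    (hA : (M.under X).Cofibrant A) : M.Cofibrant A.right := by
  rw [Cofibrant, Subsingleton.elim (initial.to A.right) (initial.to X ≫ A.hom)]
  exact M.cof_comp _ _ hX ((M.under_cofibrant_iff A).1 hA)

end ModelStruct

variable {D : Type u'} [Category.{v'} D]

noncomputable def Under.arrowMkIsoPushoutMapRight [HasPushouts C] {X Y : C} (t : X ⟶ Y)
    [IsIso t] {A B : Under X} (m : A ⟶ B) :
    Arrow.mk m.right ≅ Arrow.mk ((Under.pushout t).map m).right :=
  Arrow.isoMk (asIso (pushout.inl A.hom t) : A.right ≅ pushout A.hom t)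
    (asIso (pushout.inl B.hom t) : B.right ≅ pushout B.hom t) (pushout.inl_desc _ _ _)

lemma Under.postAdjunctionLeft_comp_mapPushoutAdj_homEquiv_right [HasPushouts D]
    {S : C ⥤ D} {U : D ⥤ C} (adj : S ⊣ U) {X : C} {Y : D} (t : S.obj X ⟶ Y)
    (A : Under X) (B : Under Y) (f : (Under.post S ⋙ Under.pushout t).obj A ⟶ B) :
    (((Under.postAdjunctionLeft adj).comp (Under.mapPushoutAdj t)).homEquiv A B f).right =
      adj.homEquiv A.right B.right (pushout.inl (S.map A.hom) t ≫ f.right) := by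
  simp only [Adjunction.comp_homEquiv, Equiv.trans_apply, Adjunction.homEquiv_unit,
    Under.mapPushoutAdj_unit_app, Under.postAdjunctionLeft_unit_app, Functor.comp_map,
    Under.post_map, Under.comp_right]
  rfl

namespace QuillenAdjunction

variable {M : ModelStruct C} {N : ModelStruct D} {S : C ⥤ D} {U : D ⥤ C}

noncomputable def underPushout [HasPushouts D] (Q : QuillenAdjunction M N S U) {X : C} {Y : D}
    (t : S.obj X ⟶ Y) [IsIso t] :
    QuillenAdjunction (M.under X) (N.under Y) (Under.post S ⋙ Under.pushout t)
      (Under.map t ⋙ Under.post U ⋙ Under.map (Q.adj.unit.app X)) where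
  adj := (Under.postAdjunctionLeft Q.adj).comp (Under.mapPushoutAdj t)
  map_cof _ hm := (N.cof.arrow_mk_iso_iff (Under.arrowMkIsoPushoutMapRight t _)).1 (Q.map_cof _ hm)
  map_trivCof_weq _ hm hm' :=
    (N.weq.arrow_mk_iso_iff (Under.arrowMkIsoPushoutMapRight t _)).1 (Q.map_trivCof_weq _ hm hm')

lemma isQuillenEquivalence_underPushout [HasInitial C] [HasTerminal D] [HasPushouts D]
    (Q : QuillenAdjunction M N S U) (hQ : IsQuillenEquivalence M N Q.adj) {X : C}
    (hX : M.Cofibrant X) {Y : D} (t : S.obj X ⟶ Y) [IsIso t] :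
    IsQuillenEquivalence (M.under X) (N.under Y) (Q.underPushout t).adj := by
  intro A B hA hB f
  change N.weq f.right ↔ M.weq ((Q.underPushout t).adj.homEquiv A B f).right
  rw [underPushout, Under.postAdjunctionLeft_comp_mapPushoutAdj_homEquiv_right]
  exact (N.weq.cancel_left_of_respectsIso (pushout.inl (S.map A.hom) t) f.right).symm.trans
    (hQ _ _ (M.cofibrant_right_of_cofibrant_under hX hA) ((N.under_fibrant_iff B).1 hB) _)

end QuillenAdjunction

/-- **Statement 13.** Suppose `(S, U) : C → D` is a Quillen equivalence, the terminal object `*`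
of `C` is cofibrant, and `S` preserves the terminal object (the canonical map `S (*) ⟶ *` is an
isomorphism). Then the induced Quillen adjunction `(S_*, U_*) : C_* → D_*` between the pointed
model categories is a Quillen equivalence. -/
theorem pointed_quillen_equivalence {C : Type u} [Category.{v} C]
    {D : Type u'} [Category.{v'} D]
    [HasLimits C] [HasColimits C] [HasLimits D] [HasColimits D]
    (M : ModelStruct C) (N : ModelStruct D) {S : C ⥤ D} {U : D ⥤ C}
    (Q : QuillenAdjunction M N S U) (hQ : IsQuillenEquivalence M N Q.adj)
    (hcof : M.Cofibrant (⊤_ C)) (hterm : IsIso (terminal.from (S.obj (⊤_ C)))) :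
    ∃ QA : QuillenAdjunction (M.under (⊤_ C)) (N.under (⊤_ D))
        (Under.post S ⋙ Under.pushout (terminal.from (S.obj (⊤_ C))))
        (Under.map (terminal.from (S.obj (⊤_ C))) ⋙
          (Under.post U ⋙ Under.map (Q.adj.unit.app (⊤_ C)))),
      IsQuillenEquivalence (M.under (⊤_ C)) (N.under (⊤_ D)) QA.adj :=
  ⟨Q.underPushout _, Q.isQuillenEquivalence_underPushout hQ hcof _⟩
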